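/- arXiv:1401.7096 — 2 statements merged into one kernel-verified Lean document; each statement's English description precedes it below -/
import Mathlib

section
/- The subgroup of GL(3,ℂ) generated by the three matrices σ₁ = diag(−1, −1, 1), σ₂ = −(1/2)·[[0, −√2, −√2],[−√2, 1, −1],[−√2, −1, 1]], and σ₃ = diag(−1, 1, −1) is isomorphic to the symmetric group S₄ on 4 letters; in particular it has order 24. -/
open Matrix Complex

noncomputable section

/-- σ₁ = diag(−1, −1, 1). -/
def m1 : Matrix (Fin 3) (Fin 3) ℂ := diagonal ![-1, -1, 1]

/-- σ₃ = diag(−1, 1, −1). -/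
def m3 : Matrix (Fin 3) (Fin 3) ℂ := diagonal ![-1, 1, -1]

/-- σ₂ = −(1/2)·[[0, −√2, −√2],[−√2, 1, −1],[−√2, −1, 1]]. -/
def m2 : Matrix (Fin 3) (Fin 3) ℂ :=
  -(1 / 2 : ℂ) •
    !![0, -(Real.sqrt 2 : ℂ), -(Real.sqrt 2 : ℂ);
       -(Real.sqrt 2 : ℂ), 1, -1;
       -(Real.sqrt 2 : ℂ), -1, 1]

/-- The sign-twisted standard representation of `S₄`, with integer entries. -/
def fmat (σ : Equiv.Perm (Fin 4)) : Matrix (Fin 3) (Fin 3) ℤ :=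
  (Equiv.Perm.sign σ : ℤ) • Matrix.of fun i j =>
    (if σ j.castSucc = i.castSucc then 1 else 0) - (if σ 3 = i.castSucc then 1 else 0)

lemma fmat_one : fmat 1 = 1 := by decide

set_option maxHeartbeats 4000000 in
lemma fmat_mul : ∀ x y, fmat (x * y) = fmat x * fmat y := by decide

lemma fmat_eq_one : ∀ x, fmat x = 1 → x = 1 := by decide

/-- `fmat` as a monoid hom. -/
def fhom : Equiv.Perm (Fin 4) →* Matrix (Fin 3) (Fin 3) ℤ where
  toFun := fmat
  map_one' := fmat_one
  map_mul' := fmat_mul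

def Emat : Matrix (Fin 3) (Fin 3) ℂ :=
  !![(Real.sqrt 2 : ℂ), (Real.sqrt 2 : ℂ), 0; -1, -1, -2; -1, 1, 0]

def Einv : Matrix (Fin 3) (Fin 3) ℂ :=
  !![(Real.sqrt 2 : ℂ)/4, 0, -(1/2); (Real.sqrt 2 : ℂ)/4, 0, 1/2; -((Real.sqrt 2 : ℂ)/4), -(1/2), 0]

lemma sqrt2_sq : (Real.sqrt 2 : ℂ) ^ 2 = 2 := by
  rw [← Complex.ofReal_pow, Real.sq_sqrt (by norm_num)]; norm_num

set_option linter.unnecessarySeqFocus false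

lemma EEinv : Emat * Einv = 1 := by
  ext i j
  fin_cases i <;> fin_cases j <;>
    simp [Emat, Einv, Matrix.mul_apply, Fin.sum_univ_three, Matrix.one_apply,
      Matrix.vecHead, Matrix.vecTail] <;>
    ring_nf <;> norm_num [sqrt2_sq]

lemma EinvE : Einv * Emat = 1 := by
  ext i j
  fin_cases i <;> fin_cases j <;>
    simp [Emat, Einv, Matrix.mul_apply, Fin.sum_univ_three, Matrix.one_apply,
      Matrix.vecHead, Matrix.vecTail] <;>
    ring_nf <;> norm_num [sqrt2_sq]

lemma key1 : Emat * !![0,-1,0;-1,0,0;0,0,-1] = m1 * Emat := by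
  ext i j
  fin_cases i <;> fin_cases j <;>
    simp [Emat, m1, Matrix.mul_apply, Fin.sum_univ_three, Matrix.diagonal,
      Matrix.vecHead, Matrix.vecTail]

lemma key2 : Emat * !![-1,0,0;0,0,-1;0,-1,0] = m2 * Emat := by
  ext i j
  fin_cases i <;> fin_cases j <;>
    simp [Emat, m2, Matrix.mul_apply, Fin.sum_univ_three,
      Matrix.vecHead, Matrix.vecTail] <;>
    ring_nf <;> norm_num [sqrt2_sq]

lemma key3 : Emat * !![-1,0,0;0,-1,0;1,1,1] = m3 * Emat := by
  ext i j
  fin_cases i <;> fin_cases j <;>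
    simp [Emat, m3, Matrix.mul_apply, Fin.sum_univ_three, Matrix.diagonal,
      Matrix.vecHead, Matrix.vecTail] <;> norm_num

/-- Conjugation by `Emat` as a monoid hom on matrices. -/
def conjHom : Matrix (Fin 3) (Fin 3) ℂ →* Matrix (Fin 3) (Fin 3) ℂ where
  toFun M := Emat * M * Einv
  map_one' := by show Emat * 1 * Einv = 1; rw [mul_one, EEinv]
  map_mul' X Y := by
    show Emat * (X * Y) * Einv = (Emat * X * Einv) * (Emat * Y * Einv)
    simp only [mul_assoc]
    rw [← mul_assoc Einv Emat, EinvE, one_mul]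

/-- The representation `S₄ →* GL(3, ℂ)`. -/
def psi : Equiv.Perm (Fin 4) →* GL (Fin 3) ℂ :=
  (conjHom.comp (((Int.castRingHom ℂ).mapMatrix.toMonoidHom).comp fhom)).toHomUnits

lemma psi_val (σ : Equiv.Perm (Fin 4)) :
    (psi σ : Matrix (Fin 3) (Fin 3) ℂ) = Emat * (fmat σ).map (Int.cast) * Einv := rfl

def s1 : Equiv.Perm (Fin 4) := Equiv.swap 0 1
def s2 : Equiv.Perm (Fin 4) := Equiv.swap 1 2
def s3 : Equiv.Perm (Fin 4) := Equiv.swap 2 3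

lemma fmat_s1 : fmat s1 = !![0,-1,0;-1,0,0;0,0,-1] := by decide
lemma fmat_s2 : fmat s2 = !![-1,0,0;0,0,-1;0,-1,0] := by decide
lemma fmat_s3 : fmat s3 = !![-1,0,0;0,-1,0;1,1,1] := by decide

lemma map_intcast (M : Matrix (Fin 3) (Fin 3) ℤ) (N : Matrix (Fin 3) (Fin 3) ℂ)
    (h : ∀ i j, ((M i j : ℤ) : ℂ) = N i j) : M.map Int.cast = N := by
  ext i j; simpa [Matrix.map_apply] using h i j

lemma psi_s1 : (psi s1 : Matrix (Fin 3) (Fin 3) ℂ) = m1 := by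
  rw [psi_val, fmat_s1, map_intcast _ (!![0,-1,0;-1,0,0;0,0,-1])
    (by intro i j; fin_cases i <;> fin_cases j <;> norm_num)]
  rw [key1, mul_assoc, EEinv, mul_one]

lemma psi_s2 : (psi s2 : Matrix (Fin 3) (Fin 3) ℂ) = m2 := by
  rw [psi_val, fmat_s2, map_intcast _ (!![-1,0,0;0,0,-1;0,-1,0])
    (by intro i j; fin_cases i <;> fin_cases j <;> norm_num)]
  rw [key2, mul_assoc, EEinv, mul_one]

lemma psi_s3 : (psi s3 : Matrix (Fin 3) (Fin 3) ℂ) = m3 := by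
  rw [psi_val, fmat_s3, map_intcast _ (!![-1,0,0;0,-1,0;1,1,1])
    (by intro i j; fin_cases i <;> fin_cases j <;> norm_num)]
  rw [key3, mul_assoc, EEinv, mul_one]

lemma psi_inj : Function.Injective psi := by
  rw [injective_iff_map_eq_one]
  intro σ h
  apply fmat_eq_one
  have hv : (psi σ : Matrix (Fin 3) (Fin 3) ℂ) = 1 := by rw [h]; rfl
  rw [psi_val] at hv
  have hm : (fmat σ).map (Int.cast : ℤ → ℂ) = 1 := by
    calc (fmat σ).map (Int.cast : ℤ → ℂ)
        = (Einv * Emat) * (fmat σ).map (Int.cast : ℤ → ℂ) * (Einv * Emat) := by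
          rw [EinvE, one_mul, mul_one]
      _ = Einv * (Emat * (fmat σ).map (Int.cast : ℤ → ℂ) * Einv) * Emat := by
          simp only [mul_assoc]
      _ = 1 := by rw [hv, mul_one, EinvE]
  ext i j
  have := congrFun (congrFun hm i) j
  simp only [Matrix.map_apply, Matrix.one_apply] at this ⊢
  split at this <;> split <;> first | exact_mod_cast this | exact_mod_cast this | simp_all

lemma perm_top : Subgroup.closure ({s1, s2, s3} : Set (Equiv.Perm (Fin 4))) = ⊤ := by
  have hr : (Set.range fun i : Fin 3 => Equiv.swap (i.castSucc) i.succ)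
      = ({s1, s2, s3} : Set (Equiv.Perm (Fin 4))) := by
    ext σ
    constructor
    · rintro ⟨i, rfl⟩
      fin_cases i
      · left; decide
      · right; left; decide
      · right; right; decide
    · rintro (rfl | rfl | rfl)
      exacts [⟨0, by decide⟩, ⟨1, by decide⟩, ⟨2, by decide⟩]
  rw [← hr]
  exact Subgroup.closure_eq_top_of_mclosure_eq_top
    (Equiv.Perm.mclosure_swap_castSucc_succ 3)

/-- The subgroup of GL(3,ℂ) generated by σ₁, σ₂, σ₃ is isomorphic to the
symmetric group S₄; in particular it has order 24. -/
theorem stmt8 (a b c : GL (Fin 3) ℂ)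
    (ha : (a : Matrix (Fin 3) (Fin 3) ℂ) = m1)
    (hb : (b : Matrix (Fin 3) (Fin 3) ℂ) = m2)
    (hc : (c : Matrix (Fin 3) (Fin 3) ℂ) = m3) :
    Nonempty ((Subgroup.closure ({a, b, c} : Set (GL (Fin 3) ℂ))) ≃* Equiv.Perm (Fin 4)) ∧
    Nat.card (Subgroup.closure ({a, b, c} : Set (GL (Fin 3) ℂ))) = 24 := by
  have ha' : psi s1 = a := Units.ext (by rw [psi_s1, ha])
  have hb' : psi s2 = b := Units.ext (by rw [psi_s2, hb])
  have hc' : psi s3 = c := Units.ext (by rw [psi_s3, hc])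
  have hcl : Subgroup.closure ({a, b, c} : Set (GL (Fin 3) ℂ)) = psi.range := by
    rw [MonoidHom.range_eq_map, ← perm_top, MonoidHom.map_closure]
    congr 1
    rw [Set.image_insert_eq, Set.image_insert_eq, Set.image_singleton, ha', hb', hc']
  have e : Equiv.Perm (Fin 4) ≃* psi.range := MonoidHom.ofInjective psi_inj
  constructor
  · exact ⟨(MulEquiv.subgroupCongr hcl).trans e.symm⟩
  · rw [hcl, ← Nat.card_congr e.toEquiv]
    simp [Nat.card_eq_fintype_card, Fintype.card_perm, Nat.factorial]
end
end

section
/- The 3-dimensional complex representation given by the matrices σ₁ = diag(−1, −1, 1), σ₂ = −(1/2)·[[0, −√2, −√2],[−√2, 1, −1],[−√2, −1, 1]], and σ₃ = diag(−1, 1, −1) is irreducible: every ℂ-linear subspace of ℂ³ that is invariant under all three matrices is either {0} or all of ℂ³. -/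
open Matrix Complex

noncomputable section

/-! The commuting involutions σ₁ and σ₃ are diagonal with pairwise distinct sign pairs
(−,−), (−,+), (+,−) on the three coordinates, so polynomials in them give the three coordinate
projections; an invariant subspace is therefore spanned by the basis vectors it contains.
Since σ₂ has nonzero entries linking the first basis vector to each of the others in both
directions, a nonzero invariant subspace contains all three basis vectors. -/

theorem one_add_mul_eq_zero_of_sq_eq_one {R : Type*} [CommRing R] [NoZeroDivisors R] {a b : R}
    (ha : a ^ 2 = 1) (hb : b ^ 2 = 1) (hab : a ≠ b) : 1 + a * b = 0 := by
  obtain rfl : b = -a :=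
    (sq_eq_sq_iff_eq_or_eq_neg.1 (hb.trans ha.symm)).resolve_left (Ne.symm hab)
  linear_combination -ha

namespace Submodule

variable {K ι : Type*} [Field K] [DecidableEq ι]

def IsCoordinateStable (W : Submodule K (ι → K)) : Prop :=
  ∀ v ∈ W, ∀ i, Pi.single i (v i) ∈ W

variable {W : Submodule K (ι → K)}

theorem isCoordinateStable_of_diagonal_mulVec_mem [Fintype ι] [NeZero (2 : K)] {d e : ι → K}
    (hd : ∀ i, d i ^ 2 = 1) (he : ∀ i, e i ^ 2 = 1)
    (hsep : ∀ i j, d i = d j → e i = e j → i = j)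
    (hdW : ∀ v ∈ W, diagonal d *ᵥ v ∈ W) (heW : ∀ v ∈ W, diagonal e *ᵥ v ∈ W) :
    W.IsCoordinateStable := by
  intro v hv i
  -- `(1 + d i • diagonal d) (1 + e i • diagonal e)` is `4` times the projection onto the
  -- `i`-th coordinate, because the sign pairs `(d j, e j)` are pairwise distinct
  have hw : v + d i • (diagonal d *ᵥ v) + e i • (diagonal e *ᵥ v)
      + (d i * e i) • (diagonal d *ᵥ (diagonal e *ᵥ v)) = (2 * 2 : K) • Pi.single i (v i) := by
    ext j
    simp only [Pi.add_apply, Pi.smul_apply, mulVec_diagonal, smul_eq_mul]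
    rcases eq_or_ne j i with rfl | hji
    · rw [Pi.single_eq_same]
      linear_combination (1 + e j ^ 2) * v j * hd j + 2 * v j * he j
    · suffices (1 + d i * d j) * (1 + e i * e j) = 0 by
        simp only [Pi.single_eq_of_ne hji, mul_zero]
        linear_combination v j * this
      by_cases hde : d i = d j
      · rw [one_add_mul_eq_zero_of_sq_eq_one (he i) (he j)
          fun h => hji (hsep i j hde h).symm, mul_zero]
      · rw [one_add_mul_eq_zero_of_sq_eq_one (hd i) (hd j) hde, zero_mul]
  have hmem := W.smul_mem (2 * 2 : K)⁻¹ (hw ▸ W.add_mem (W.add_mem (W.add_mem hv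
    (W.smul_mem _ (hdW v hv))) (W.smul_mem _ (heW v hv))) (W.smul_mem _ (hdW _ (heW v hv))))
  rwa [smul_smul, inv_mul_cancel₀ (mul_ne_zero two_ne_zero two_ne_zero), one_smul] at hmem

theorem eq_top_of_forall_single_one_mem [Fintype ι] (h : ∀ i, Pi.single i (1 : K) ∈ W) :
    W = ⊤ := by
  rw [eq_top_iff, ← (Pi.basisFun K ι).span_eq, span_le]
  rintro _ ⟨i, rfl⟩
  simpa using h i

namespace IsCoordinateStable

theorem single_one_mem (hW : W.IsCoordinateStable) {v : ι → K} (hv : v ∈ W) {i : ι}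
    (hvi : v i ≠ 0) : Pi.single i 1 ∈ W := by
  simpa [← Pi.single_smul', smul_eq_mul, inv_mul_cancel₀ hvi] using
    W.smul_mem (v i)⁻¹ (hW v hv i)

theorem single_one_mem_of_mulVec [Fintype ι] (hW : W.IsCoordinateStable) {A : Matrix ι ι K}
    (hA : ∀ v ∈ W, A *ᵥ v ∈ W) {i j : ι} (hj : Pi.single j 1 ∈ W) (hij : A i j ≠ 0) :
    Pi.single i 1 ∈ W :=
  hW.single_one_mem (hA _ hj) (by simpa using hij)

theorem eq_bot_or_eq_top [Fintype ι] (hW : W.IsCoordinateStable) {A : Matrix ι ι K}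
    (hA : ∀ v ∈ W, A *ᵥ v ∈ W) (c : ι)
    (hcol : ∀ i, i ≠ c → A i c ≠ 0) (hrow : ∀ i, i ≠ c → A c i ≠ 0) : W = ⊥ ∨ W = ⊤ := by
  refine or_iff_not_imp_left.2 fun hbot => ?_
  obtain ⟨v, hv, hv0⟩ := exists_mem_ne_zero_of_ne_bot hbot
  obtain ⟨i, hvi⟩ := Function.ne_iff.1 hv0
  have hi := hW.single_one_mem hv hvi
  have hc : Pi.single c 1 ∈ W := by
    by_cases hic : i = c
    · exact hic ▸ hi
    · exact hW.single_one_mem_of_mulVec hA hi (hrow i hic)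
  refine eq_top_of_forall_single_one_mem fun j => ?_
  by_cases hjc : j = c
  · exact hjc ▸ hc
  · exact hW.single_one_mem_of_mulVec hA hc (hcol j hjc)

end IsCoordinateStable

end Submodule

theorem m2_apply_zero_ne_zero (i : Fin 3) (hi : i ≠ 0) : m2 i 0 ≠ 0 := by
  fin_cases i <;> simp_all [m2]

theorem m2_zero_apply_ne_zero (i : Fin 3) (hi : i ≠ 0) : m2 0 i ≠ 0 := by
  fin_cases i <;> simp_all [m2]

/-- The representation given by σ₁, σ₂, σ₃ is irreducible: every subspace of ℂ³
invariant under all three matrices is {0} or ℂ³. -/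
theorem stmt9 (W : Submodule ℂ (Fin 3 → ℂ))
    (h1 : ∀ v ∈ W, m1.mulVec v ∈ W)
    (h2 : ∀ v ∈ W, m2.mulVec v ∈ W)
    (h3 : ∀ v ∈ W, m3.mulVec v ∈ W) :
    W = ⊥ ∨ W = ⊤ := by
  have hW : W.IsCoordinateStable :=
    Submodule.isCoordinateStable_of_diagonal_mulVec_mem (d := ![-1, -1, 1]) (e := ![-1, 1, -1])
      (by intro i; fin_cases i <;> norm_num) (by intro i; fin_cases i <;> norm_num)
      (by intro i j; fin_cases i <;> fin_cases j <;> norm_num) h1 h3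
  exact hW.eq_bot_or_eq_top h2 0 m2_apply_zero_ne_zero m2_zero_apply_ne_zero

end
end
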